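/- Let X and Z be jointly Gaussian with X | Z_{1:t-1} ~ N(a, P) for the state prior and Z_t | X ~ N(ΛX, Σ_ε). Then the posterior X | Z_{1:t} is Gaussian with mean a + K(Z_t - Λa) and covariance (I - KΛ)P, where K = P Λᵀ (Λ P Λᵀ + Σ_ε)^{-1}. -/
import Mathlib


open Matrix Real

/-- Density of the multivariate Gaussian `N(μ, S)` on `Fin m → ℝ`. -/
noncomputable def gaussianPdf {m : ℕ} (μ : Fin m → ℝ) (S : Matrix (Fin m) (Fin m) ℝ)
    (x : Fin m → ℝ) : ℝ :=
  (2 * π) ^ (-(m : ℝ) / 2) * S.det ^ (-(1 : ℝ) / 2) *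
    Real.exp (-(1 / 2) * ((x - μ) ⬝ᵥ S⁻¹.mulVec (x - μ)))

private lemma dp_shift {k l : ℕ} (A : Matrix (Fin k) (Fin l) ℝ) (u : Fin l → ℝ)
    (w : Fin k → ℝ) : u ⬝ᵥ Aᵀ.mulVec w = A.mulVec u ⬝ᵥ w := by
  rw [dotProduct_mulVec, vecMul_transpose]

private lemma dp_symm {k : ℕ} {A : Matrix (Fin k) (Fin k) ℝ} (hA : Aᵀ = A)
    (v w : Fin k → ℝ) : v ⬝ᵥ A.mulVec w = w ⬝ᵥ A.mulVec v := by
  nth_rewrite 1 [← hA]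
  rw [dp_shift, dotProduct_comm]

private lemma mul_rearrange (cm cn dP dSe dS dC eA eB eC eD : ℝ)
    (h1 : dP * dSe = dS * dC) (h2 : eA * eB = eC * eD) :
    cm * dP * eA * (cn * dSe * eB) = cn * dS * eC * (cm * dC * eD) := by
  calc cm * dP * eA * (cn * dSe * eB) = cm * cn * ((dP * dSe) * (eA * eB)) := by ring
    _ = cm * cn * ((dS * dC) * (eC * eD)) := by rw [h1, h2]
    _ = cn * dS * eC * (cm * dC * eD) := by ring

/-- Kalman filter update: if `X ~ N(a, P)` and `Z = ΛX + ε` with `ε ~ N(0, Se)`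
independent of `X`, then the joint density factorises as the marginal density of `Z`
times the Gaussian posterior density `N(a + K(z - Λa), (I - KΛ)P)` with
`K = PΛᵀ(ΛPΛᵀ + Se)⁻¹`. -/
theorem kalman_update {m n : ℕ}
    (a : Fin m → ℝ) (P : Matrix (Fin m) (Fin m) ℝ)
    (Λ : Matrix (Fin n) (Fin m) ℝ) (Se : Matrix (Fin n) (Fin n) ℝ)
    (hP : P.PosDef) (hSe : Se.PosDef)
    (K : Matrix (Fin m) (Fin n) ℝ)
    (hK : K = P * Λᵀ * (Λ * P * Λᵀ + Se)⁻¹) :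
    ∀ (x : Fin m → ℝ) (z : Fin n → ℝ),
      gaussianPdf a P x * gaussianPdf (Λ.mulVec x) Se z =
        gaussianPdf (Λ.mulVec a) (Λ * P * Λᵀ + Se) z *
          gaussianPdf (a + K.mulVec (z - Λ.mulVec a)) ((1 - K * Λ) * P) x := by
  intro x z
  set S : Matrix (Fin n) (Fin n) ℝ := Λ * P * Λᵀ + Se with hSdef
  set C : Matrix (Fin m) (Fin m) ℝ := (1 - K * Λ) * P with hCdef
  have hPΛ : (Λ * P * Λᵀ).PosSemidef := by
    have := hP.posSemidef.mul_mul_conjTranspose_same Λ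
    rwa [conjTranspose_eq_transpose_of_trivial] at this
  have hS : S.PosDef := Matrix.PosDef.posSemidef_add hPΛ hSe
  have hPd : IsUnit P.det := hP.det_pos.ne'.isUnit
  have hSed : IsUnit Se.det := hSe.det_pos.ne'.isUnit
  have hSd : IsUnit S.det := hS.det_pos.ne'.isUnit
  have hPt : Pᵀ = P := hP.isHermitian.eq
  have hSet : Seᵀ = Se := hSe.isHermitian.eq
  have hSt : Sᵀ = S := hS.isHermitian.eq
  set B : Matrix (Fin n) (Fin n) ℝ := Se⁻¹ with hBdef
  have hBt : Bᵀ = B := by rw [hBdef, Matrix.transpose_nonsing_inv, hSet]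
  have hBSe : B * Se = 1 := Matrix.nonsing_inv_mul _ hSed
  have hSeB : Se * B = 1 := Matrix.mul_nonsing_inv _ hSed
  set M : Matrix (Fin m) (Fin m) ℝ := P⁻¹ + Λᵀ * B * Λ with hMdef
  have hLP : Λ * (P * Λᵀ) = S - Se := by
    rw [hSdef, Matrix.mul_assoc, add_sub_cancel_right]
  -- Kᵀ = S⁻¹ * (Λ * P)
  have hKT : Kᵀ = S⁻¹ * (Λ * P) := by
    rw [hK, Matrix.transpose_mul, Matrix.transpose_mul, transpose_transpose,
      Matrix.transpose_nonsing_inv, hSt, hPt]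
  -- M * K = Λᵀ * B
  have h1 : M * (P * Λᵀ) = Λᵀ * (B * S) := by
    rw [hMdef, Matrix.add_mul, Matrix.nonsing_inv_mul_cancel_left _ _ hPd]
    simp only [Matrix.mul_assoc]
    rw [hLP, Matrix.mul_sub, Matrix.mul_sub, hBSe, Matrix.mul_one]
    abel
  have hMK : M * K = Λᵀ * B := by
    rw [hK, ← Matrix.mul_assoc, h1, Matrix.mul_assoc,
      Matrix.mul_nonsing_inv_cancel_right _ _ hSd]
  -- Kᵀ * (Λᵀ * B) = B - S⁻¹
  have hKt : Kᵀ * (Λᵀ * B) = B - S⁻¹ := by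
    rw [hKT, Matrix.mul_assoc]
    have h2 : Λ * P * (Λᵀ * B) = (S - Se) * B := by
      rw [Matrix.mul_assoc Λ P, ← Matrix.mul_assoc, ← Matrix.mul_assoc,
        Matrix.mul_assoc Λ P Λᵀ, hLP]
    rw [h2, Matrix.sub_mul, hSeB, Matrix.mul_sub, Matrix.mul_one,
      Matrix.nonsing_inv_mul_cancel_left _ _ hSd]
  -- C * M = 1
  have h5 : P * M = 1 + P * (Λᵀ * (B * Λ)) := by
    rw [hMdef, Matrix.mul_add, Matrix.mul_nonsing_inv _ hPd]
    simp only [Matrix.mul_assoc]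
  have h3 : Λ * ((1 : Matrix (Fin m) (Fin m) ℝ) + P * (Λᵀ * (B * Λ))) = S * (B * Λ) := by
    rw [Matrix.mul_add, Matrix.mul_one, ← Matrix.mul_assoc P Λᵀ (B * Λ),
      ← Matrix.mul_assoc Λ (P * Λᵀ) (B * Λ), hLP, Matrix.sub_mul,
      ← Matrix.mul_assoc Se B Λ, hSeB, Matrix.one_mul]
    abel
  have h4 : K * (S * (B * Λ)) = P * (Λᵀ * (B * Λ)) := by
    rw [hK, Matrix.mul_assoc (P * Λᵀ) S⁻¹ _,
      Matrix.nonsing_inv_mul_cancel_left _ _ hSd, Matrix.mul_assoc]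
  have hCM : C * M = 1 := by
    rw [hCdef, Matrix.mul_assoc, h5, Matrix.sub_mul, Matrix.one_mul,
      Matrix.mul_assoc K Λ _, h3, h4]
    abel
  have hCinv : C⁻¹ = M := Matrix.inv_eq_right_inv hCM
  have hMt : Mᵀ = M := by
    rw [hMdef, Matrix.transpose_add, Matrix.transpose_nonsing_inv, hPt,
      Matrix.transpose_mul, Matrix.transpose_mul, transpose_transpose, hBt,
      Matrix.mul_assoc]
  -- determinant identity
  have hΛK : (1 : Matrix (Fin n) (Fin n) ℝ) - Λ * K = Se * S⁻¹ := by
    rw [hK]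
    have : Λ * (P * Λᵀ * S⁻¹) = S * S⁻¹ - Se * S⁻¹ := by
      rw [← Matrix.mul_assoc, ← Matrix.mul_assoc, ← Matrix.sub_mul,
        Matrix.mul_assoc Λ P Λᵀ, hLP]
    rw [this, Matrix.mul_nonsing_inv _ hSd]
    abel
  have hdet : C.det * S.det = P.det * Se.det := by
    have h1 : C.det = (1 - Λ * K).det * P.det := by
      rw [hCdef, det_mul, Matrix.det_one_sub_mul_comm]
    rw [h1, hΛK, det_mul, Matrix.det_nonsing_inv, Ring.inverse_eq_inv]
    have := hS.det_pos.ne'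
    field_simp
  have hCpos : 0 < C.det := by
    have h6 : C.det = P.det * Se.det / S.det := by
      rw [eq_div_iff hS.det_pos.ne']; exact hdet
    rw [h6]
    exact div_pos (mul_pos hP.det_pos hSe.det_pos) hS.det_pos
  -- quadratic form identity
  simp only [gaussianPdf, hCinv]
  set u : Fin m → ℝ := x - a with hu
  set v : Fin n → ℝ := z - Λ.mulVec a with hv
  have hzx : z - Λ.mulVec x = v - Λ.mulVec u := by
    rw [hv, hu, Matrix.mulVec_sub]
    abel
  have hxa : x - (a + K.mulVec v) = u - K.mulVec v := by
    rw [hu, sub_add_eq_sub_sub]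
  rw [hzx, hxa]
  have key : u ⬝ᵥ P⁻¹.mulVec u + (v - Λ.mulVec u) ⬝ᵥ B.mulVec (v - Λ.mulVec u)
      = v ⬝ᵥ S⁻¹.mulVec v + (u - K.mulVec v) ⬝ᵥ M.mulVec (u - K.mulVec v) := by
    have f1 : (Λ.mulVec u) ⬝ᵥ B.mulVec (Λ.mulVec u)
        = u ⬝ᵥ (Λᵀ * B * Λ).mulVec u := by
      rw [Matrix.mulVec_mulVec, ← dp_shift, Matrix.mulVec_mulVec,
        ← Matrix.mul_assoc]
    have f2 : v ⬝ᵥ B.mulVec (Λ.mulVec u) = (Λ.mulVec u) ⬝ᵥ B.mulVec v :=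
      dp_symm hBt v (Λ.mulVec u)
    have f3 : (Λ.mulVec u) ⬝ᵥ B.mulVec v = u ⬝ᵥ (Λᵀ * B).mulVec v := by
      rw [← dp_shift, Matrix.mulVec_mulVec]
    have f4 : u ⬝ᵥ M.mulVec (K.mulVec v) = u ⬝ᵥ (Λᵀ * B).mulVec v := by
      rw [Matrix.mulVec_mulVec, hMK]
    have f5 : (K.mulVec v) ⬝ᵥ M.mulVec u = u ⬝ᵥ M.mulVec (K.mulVec v) :=
      dp_symm hMt (K.mulVec v) u
    have f6 : (K.mulVec v) ⬝ᵥ M.mulVec (K.mulVec v)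
        = v ⬝ᵥ B.mulVec v - v ⬝ᵥ S⁻¹.mulVec v := by
      rw [Matrix.mulVec_mulVec, hMK, ← dp_shift, Matrix.mulVec_mulVec,
        ← Matrix.mul_assoc, Matrix.mul_assoc Kᵀ Λᵀ B, hKt, Matrix.sub_mulVec,
        dotProduct_sub]
    have f7 : u ⬝ᵥ M.mulVec u
        = u ⬝ᵥ P⁻¹.mulVec u + u ⬝ᵥ (Λᵀ * B * Λ).mulVec u := by
      rw [hMdef, Matrix.add_mulVec, dotProduct_add]
    simp only [Matrix.mulVec_sub, dotProduct_sub, sub_dotProduct]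
    rw [f1, f2, f3, f7, f5, f4, f6]
    ring
  have hE : Real.exp (-(1 / 2) * (u ⬝ᵥ P⁻¹.mulVec u)) *
        Real.exp (-(1 / 2) * ((v - Λ.mulVec u) ⬝ᵥ B.mulVec (v - Λ.mulVec u)))
      = Real.exp (-(1 / 2) * (v ⬝ᵥ S⁻¹.mulVec v)) *
        Real.exp (-(1 / 2) * ((u - K.mulVec v) ⬝ᵥ M.mulVec (u - K.mulVec v))) := by
    rw [← Real.exp_add, ← Real.exp_add, ← mul_add, ← mul_add, key]
  have hdets : P.det ^ (-(1 : ℝ) / 2) * Se.det ^ (-(1 : ℝ) / 2)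
      = S.det ^ (-(1 : ℝ) / 2) * C.det ^ (-(1 : ℝ) / 2) := by
    rw [← Real.mul_rpow hP.det_pos.le hSe.det_pos.le, ← hdet,
      mul_comm C.det S.det, Real.mul_rpow hS.det_pos.le hCpos.le]
  exact mul_rearrange _ _ _ _ _ _ _ _ _ _ hdets hE
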